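/- arXiv:nlin/0307020 — 2 statements merged into one kernel-verified Lean document; each statement's English description precedes it below -/
import Mathlib

section
/- Assume D > 1. Then φ^{D+2}(c_D) = (F⁻¹ γ c₂ u₂ ⋯ c_D u_D) · (F⁻¹ η F) · (u_D⁻¹ c_D⁻¹ ⋯ u₂⁻¹ c₂⁻¹ γ⁻¹ F), where γ = u₀ c₁ u₁ and η = u₀⁻¹ F u_{D+1}⁻¹ F⁻¹ u₀. -/
abbrev G : Type := FreeGroup (ℤ ⊕ ℤ)

/-- generator cₙ -/
def c (n : ℤ) : G := FreeGroup.of (Sum.inl n)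
/-- generator uₙ -/
def u (n : ℤ) : G := FreeGroup.of (Sum.inr n)

/-- F = c₁ c₂ ⋯ c_D -/
def F (D : ℕ) : G := ((List.range D).map (fun i => c ((i : ℤ) + 1))).prod

/-- the tangle endomorphism for minimum delay time D -/
def φ (D : ℕ) : G →* G := FreeGroup.lift fun x =>
  match x with
  | Sum.inl n => if n = (D : ℤ) then (F D)⁻¹ * (u 0)⁻¹ * F D else c (n + 1)
  | Sum.inr n => u (n + 1)

/-!
Write `Sₖ = c₁u₁ ⋯ cₖuₖ` (`cuProd k`). Since `φ` shifts `c₁ ⋯ cₖ` to `c₂ ⋯ cₖ₊₁` for `k < D` and sends `c_D` to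
`F⁻¹u₀⁻¹F`, one gets `φ(F) = c₁⁻¹u₀⁻¹F`, and then by induction `φᵏ⁺¹(F) = (Sₖcₖ₊₁)⁻¹u₀⁻¹F` for
`k < D`: each further application shifts `Sₖcₖ₊₁` to `(c₁u₁)⁻¹Sₖ₊₁cₖ₊₂`, and the stray `c₁u₁`
cancels against `φ(u₀⁻¹F) = u₁⁻¹c₁⁻¹u₀⁻¹F`. One more step, where `c_D` is hit, gives
`φᴰ⁺¹(F) = F⁻¹u₀F S_D⁻¹u₀⁻¹F`, and `φᴰ⁺²(c_D) = φᴰ⁺¹(F)⁻¹ u_{D+1}⁻¹ φᴰ⁺¹(F)` with `S_D = u₀⁻¹γQ`.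
-/

/-- `(List.range n).map (fun i => f (i : ℤ))` elaborates by coercing the list itself to `List ℤ`
through the list monad; this turns such products back into products over `List.range n`. -/
lemma prod_map_range_natCast {M : Type*} [Monoid M] (f : ℤ → M) (n : ℕ) :
    ((List.range n : List ℤ).map f).prod = ((List.range n).map fun i : ℕ => f i).prod := by
  simp only [List.pure_def, List.bind_eq_flatMap, ← List.map_eq_flatMap, List.map_map]
  rfl

def cProd (k : ℕ) : G := ((List.range k).map fun i : ℕ => c (i + 1)).prod

def cuProd (k : ℕ) : G := ((List.range k).map fun i : ℕ => c (i + 1) * u (i + 1)).prod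

lemma F_eq_cProd (D : ℕ) : F D = cProd D := prod_map_range_natCast _ D

lemma cProd_succ (k : ℕ) : cProd (k + 1) = cProd k * c (k + 1) := by
  simp only [cProd, List.prod_range_succ]

lemma cuProd_succ (k : ℕ) : cuProd (k + 1) = cuProd k * (c (k + 1) * u (k + 1)) := by
  simp only [cuProd, List.prod_range_succ]

lemma cuProd_succ_eq_mul_prod (k : ℕ) :
    cuProd (k + 1) = c 1 * u 1 * ((List.range k).map fun i : ℕ => c (i + 2) * u (i + 2)).prod := by
  simp only [cuProd, List.prod_range_succ', Nat.cast_zero, zero_add, Nat.cast_succ, add_assoc,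
    one_add_one_eq_two, mul_assoc]

lemma φ_u (D : ℕ) (n : ℤ) : φ D (u n) = u (n + 1) := by simp [φ, u]

lemma φ_c_of_ne {D : ℕ} {n : ℤ} (h : n ≠ D) : φ D (c n) = c (n + 1) := by simp [φ, c, h]

lemma φ_c_self (D : ℕ) : φ D (c D) = (F D)⁻¹ * (u 0)⁻¹ * F D := by simp [φ, c]

lemma iterate_φ_u (D k : ℕ) (n : ℤ) : (φ D)^[k] (u n) = u (n + k) := by
  induction k generalizing n with
  | zero => simp
  | succ k ih => rw [Function.iterate_succ_apply, φ_u, ih]; push_cast; ring_nf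

lemma φ_cProd {D k : ℕ} (hk : k < D) : φ D (cProd k) = (c 1)⁻¹ * cProd (k + 1) := by
  induction k with
  | zero => simp [cProd]
  | succ k ih =>
    rw [cProd_succ, map_mul, ih (by omega), φ_c_of_ne (by omega), cProd_succ (k + 1)]
    push_cast; group

lemma φ_cuProd {D k : ℕ} (hk : k < D) : φ D (cuProd k) = (c 1 * u 1)⁻¹ * cuProd (k + 1) := by
  induction k with
  | zero => simp [cuProd]
  | succ k ih =>
    rw [cuProd_succ, map_mul, map_mul, ih (by omega), φ_c_of_ne (by omega), φ_u,
      cuProd_succ (k + 1)]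
    push_cast; group

lemma φ_F {D : ℕ} (hD : 0 < D) : φ D (F D) = (c 1)⁻¹ * (u 0)⁻¹ * F D := by
  obtain ⟨m, rfl⟩ : ∃ m, D = m + 1 := ⟨D - 1, by omega⟩
  have hcD := φ_c_self (m + 1)
  push_cast at hcD
  conv_lhs => rw [F_eq_cProd, cProd_succ]
  rw [map_mul, φ_cProd (Nat.lt_succ_self m), hcD, ← F_eq_cProd]
  group

lemma iterate_φ_F {D k : ℕ} (hk : k < D) :
    (φ D)^[k + 1] (F D) = (cuProd k * c (k + 1))⁻¹ * (u 0)⁻¹ * F D := by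
  induction k with
  | zero => simpa [cuProd] using φ_F hk
  | succ k ih =>
    rw [Function.iterate_succ_apply', ih (by omega), map_mul, map_mul, map_inv, map_inv,
      map_mul, φ_cuProd (by omega), φ_c_of_ne (by omega), φ_u, φ_F (by omega)]
    push_cast; group

lemma iterate_φ_F_top {D : ℕ} (hD : 0 < D) :
    (φ D)^[D + 1] (F D) = (F D)⁻¹ * u 0 * F D * (cuProd D)⁻¹ * (u 0)⁻¹ * F D := by
  obtain ⟨m, rfl⟩ : ∃ m, D = m + 1 := ⟨D - 1, by omega⟩
  have hcD := φ_c_self (m + 1)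
  push_cast at hcD
  rw [Function.iterate_succ_apply', iterate_φ_F (Nat.lt_succ_self m), map_mul, map_mul, map_inv,
    map_inv, map_mul, φ_cuProd (Nat.lt_succ_self m), hcD, φ_u, φ_F hD]
  push_cast; group

theorem stmt_6 (D : ℕ) (hD : 1 < D) :
    let γ : G := u 0 * c 1 * u 1
    let η : G := (u 0)⁻¹ * F D * (u ((D : ℤ) + 1))⁻¹ * (F D)⁻¹ * u 0
    let Q : G := ((List.range (D - 1)).map (fun i => c ((i : ℤ) + 2) * u ((i : ℤ) + 2))).prod
    (⇑(φ D))^[D + 2] (c D) =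
      ((F D)⁻¹ * γ * Q) * ((F D)⁻¹ * η * F D) * (Q⁻¹ * γ⁻¹ * F D) := by
  intro γ η Q
  have hcuProd : cuProd D = (u 0)⁻¹ * γ * Q := by
    obtain ⟨m, rfl⟩ : ∃ m, D = m + 1 := ⟨D - 1, by omega⟩
    simp only [cuProd_succ_eq_mul_prod, γ, Q, Nat.add_sub_cancel, prod_map_range_natCast]
    group
  rw [Function.iterate_succ_apply, φ_c_self, iterate_map_mul, iterate_map_mul, iterate_map_inv,
    iterate_map_inv, iterate_φ_u, iterate_φ_F_top (by omega), hcuProd]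
  simp only [η]
  group
end

section
/- For D = 1 and every n ≥ 0, the total number of occurrences of letters from {u_k^{±1} : k ∈ ℤ} in the reduced word of φⁿ(c₁) equals 2ⁿ − 1. -/
/-!
Write `wₙ = φⁿ(c₁)`. Since `φ(c₁) = c₁⁻¹ u₀⁻¹ c₁` and `φ` shifts the `u`'s, `wₙ₊₁ = wₙ⁻¹ uₙ⁻¹ wₙ`.
The reduced word of `wₙ` begins and ends with `c₁^{±1}`, so no cancellation occurs in this
product: the reduced word of `wₙ₊₁` is that of `wₙ⁻¹`, the letter `uₙ⁻¹`, then that of `wₙ`.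
Hence the number of `u`-letters satisfies `aₙ₊₁ = 2aₙ + 1`, `a₀ = 0`.
-/

namespace FreeGroup

variable {α : Type*}

theorem head?_map_fst_invRev (L : List (α × Bool)) :
    (invRev L).head?.map Prod.fst = L.getLast?.map Prod.fst := by
  simp [invRev, List.head?_reverse, List.getLast?_map, Option.map_map, Function.comp_def]

theorem getLast?_map_fst_invRev (L : List (α × Bool)) :
    (invRev L).getLast?.map Prod.fst = L.head?.map Prod.fst := by
  simp [invRev, List.getLast?_reverse, List.head?_map, Option.map_map, Function.comp_def]

theorem countP_fst_invRev (p : α → Bool) (L : List (α × Bool)) :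
    (invRev L).countP (fun l => p l.1) = L.countP (fun l => p l.1) := by
  simp [invRev, List.countP_reverse, List.countP_map, Function.comp_def]

variable [DecidableEq α]

theorem toWord_inv_mul_mk_mul {x : FreeGroup α} {a : α} (b : Bool)
    (ha : x.toWord.head?.map Prod.fst ≠ some a) :
    (x⁻¹ * mk [(a, b)] * x).toWord = invRev x.toWord ++ (a, b) :: x.toWord := by
  have hred : IsReduced (invRev x.toWord ++ (a, b) :: x.toWord) := by
    have hinv : IsReduced (invRev x.toWord) := toWord_inv x ▸ isReduced_toWord
    refine List.isChain_append.mpr ⟨hinv, List.isChain_cons.mpr ⟨?_, isReduced_toWord⟩, ?_⟩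
    · intro y hy hay
      exact (ha (by rw [Option.mem_def.mp hy, Option.map_some, ← hay])).elim
    · intro y hy z hz hyz
      rw [Option.mem_def, List.head?_cons, Option.some_inj] at hz
      subst hz
      have := getLast?_map_fst_invRev x.toWord
      exact (ha (by rw [← this, Option.mem_def.mp hy, Option.map_some, hyz])).elim
  conv_lhs => rw [← mk_toWord (x := x), inv_mk, mul_mk, mul_mk]
  rw [toWord_mk, List.append_assoc, List.singleton_append, hred.reduce_eq]

end FreeGroup

open FreeGroup

theorem φ_one_apply_c_one : φ 1 (c 1) = (c 1)⁻¹ * (u 0)⁻¹ * c 1 := by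
  simp [φ, c, F, List.range_succ]

theorem iterate_φ_one_apply_u (n : ℕ) (k : ℤ) : (⇑(φ 1))^[n] (u k) = u (k + n) := by
  induction n generalizing k with
  | zero => simp
  | succ n ih =>
    rw [Function.iterate_succ_apply, show φ 1 (u k) = u (k + 1) by simp [φ, u], ih]
    congr 1
    push_cast
    ring

theorem iterate_φ_one_c_one_succ (n : ℕ) :
    (⇑(φ 1))^[n + 1] (c 1) =
      ((⇑(φ 1))^[n] (c 1))⁻¹ * mk [(Sum.inr (n : ℤ), false)] * (⇑(φ 1))^[n] (c 1) := by
  rw [Function.iterate_succ_apply, φ_one_apply_c_one, iterate_map_mul, iterate_map_mul,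
    iterate_map_inv, iterate_map_inv, iterate_φ_one_apply_u, zero_add]
  rfl

theorem toWord_iterate_φ_one_c_one_succ {n : ℕ}
    (h : ((⇑(φ 1))^[n] (c 1)).toWord.head?.map Prod.fst ≠ some (Sum.inr (n : ℤ))) :
    ((⇑(φ 1))^[n + 1] (c 1)).toWord =
      invRev ((⇑(φ 1))^[n] (c 1)).toWord ++
        (Sum.inr (n : ℤ), false) :: ((⇑(φ 1))^[n] (c 1)).toWord := by
  rw [iterate_φ_one_c_one_succ, toWord_inv_mul_mk_mul _ h]

theorem toWord_iterate_φ_one_c_one_ends (n : ℕ) :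
    ((⇑(φ 1))^[n] (c 1)).toWord.head?.map Prod.fst = some (Sum.inl 1) ∧
      ((⇑(φ 1))^[n] (c 1)).toWord.getLast?.map Prod.fst = some (Sum.inl 1) := by
  induction n with
  | zero => exact ⟨rfl, rfl⟩
  | succ n ih =>
    obtain ⟨hhead, hlast⟩ := ih
    rw [toWord_iterate_φ_one_c_one_succ (by simp [hhead])]
    set L := ((⇑(φ 1))^[n] (c 1)).toWord
    have hL : L ≠ [] := by rintro h; simp [h] at hlast
    constructor
    · rw [List.head?_append_of_ne_nil _ (by simpa [invRev] using hL), head?_map_fst_invRev, hlast]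
    · rw [← List.singleton_append, ← List.append_assoc, List.getLast?_append_of_ne_nil _ hL, hlast]

theorem stmt_10 (n : ℕ) :
    (((⇑(φ 1))^[n] (c 1)).toWord.countP (fun l => l.1.isRight)) = 2 ^ n - 1 := by
  induction n with
  | zero => rfl
  | succ n ih =>
    rw [toWord_iterate_φ_one_c_one_succ (by simp [(toWord_iterate_φ_one_c_one_ends n).1]),
      List.countP_append, List.countP_cons, countP_fst_invRev Sum.isRight, ih]
    have := Nat.one_le_two_pow (n := n)
    simp only [Sum.isRight_inr, if_true, pow_succ]
    omega
end
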